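/- (Theorem 1) Let N = ∏_{i=1}^{I} f_i be a factorization of N into (not necessarily distinct) primes with f₁ ≤ ... ≤ f_I, and let θ₀, θ₁,...,θ_K be angles with cos θ_k ≠ cos θ₀ for all k, where K ≤ I. Then for any d_min > 0 there exists x ∈ ℝ^N with |x_m − x_n| ≥ d_min for all m ≠ n such that a(x,θ_k)^H a(x,θ₀) = 0 for all k = 1,...,K. -/

import Mathlib

/-!
Index the `N = ∏ fᵢ` elements by digit vectors `p ∈ ∏ᵢ Fin fᵢ` and place element `p` at
`∑ᵢ tᵢ pᵢ`. With `δₖ = (2π/λ)(cos θ₀ - cos θₖ)` and `zᵢ = exp (i δₖ tᵢ)`, the inner product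
`a(x,θₖ)ᴴ a(x,θ₀)` factors as `∏ᵢ ∑_{j < fᵢ} zᵢ ^ j`, so it vanishes once `z_k` is a primitive
`f_k`-th root of unity. The admissible `t_k` form an unbounded set, so the weights can also be
chosen to grow fast, `|tᵢ| ≥ d_min + ∑_{j<i} |tⱼ| (fⱼ - 1)`; then the highest digit in which
two positions differ dominates their distance.
-/

open Complex Finset
open scoped Real

section MixedRadix

variable {ι : Type*} [LinearOrder ι] [LocallyFiniteOrderBot ι]

theorem exists_abs_ge_add_sum_Iio [WellFoundedLT ι] {P : ι → ℝ → Prop}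
    (hP : ∀ i A, ∃ t, A ≤ |t| ∧ P i t) (c : ι → ℝ) (d : ℝ) :
    ∃ t : ι → ℝ, ∀ i, P i (t i) ∧ d + ∑ j ∈ Iio i, |t j| * c j ≤ |t i| := by
  choose g hg using hP
  let t : ι → ℝ := WellFoundedLT.fix fun i t' =>
    g i (d + ∑ j ∈ (Iio i).attach, |t' j (mem_Iio.1 j.2)| * c j)
  have ht i : t i = g i (d + ∑ j ∈ Iio i, |t j| * c j) := by
    rw [← sum_attach (Iio i) (fun j => |t j| * c j)]
    exact WellFoundedLT.fix_eq _ i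
  exact ⟨t, fun i => ht i ▸ (hg i _).symm⟩

variable [Fintype ι] {F : ι → ℕ} {t : ι → ℝ} {d : ℝ}

theorem le_abs_sum_mul_sub (ht : ∀ i, d + ∑ j ∈ Iio i, |t j| * ((F j : ℝ) - 1) ≤ |t i|)
    {p q : ∀ i, Fin (F i)} (hpq : p ≠ q) :
    d ≤ |∑ i, t i * (p i : ℝ) - ∑ i, t i * (q i : ℝ)| := by
  classical
  set Δ : ι → ℝ := fun j => t j * ((p j : ℝ) - q j)
  have hdiff : ∃ j, p j ≠ q j := by
    by_contra! h; exact hpq (funext h)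
  let s := univ.filter fun j => p j ≠ q j
  have hs : s.Nonempty := let ⟨j, hj⟩ := hdiff; ⟨j, by simpa [s] using hj⟩
  set i := s.max' hs
  have hi : p i ≠ q i := by simpa [s] using s.max'_mem hs
  have hΔ_above : ∀ j, i < j → Δ j = 0 := fun j hij => by
    have : p j = q j := by
      by_contra h; exact (s.le_max' j (by simpa [s] using h)).not_gt hij
    simp [Δ, this]
  have hsum : ∑ j, t j * (p j : ℝ) - ∑ j, t j * (q j : ℝ) = Δ i + ∑ j ∈ Iio i, Δ j := by
    rw [← sum_sub_distrib, ← sum_insert (by simp), Finset.Iio_insert]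
    refine (sum_congr rfl fun j _ => by ring : _ = ∑ j, Δ j).trans ?_
    exact (sum_subset (subset_univ _) fun j _ hj => hΔ_above j (by simpa using hj)).symm
  have hdigit : ∀ j, |(p j : ℝ) - q j| ≤ (F j : ℝ) - 1 := fun j => by
    have hp : (p j : ℝ) + 1 ≤ F j := by exact_mod_cast (p j).isLt
    have hq : (q j : ℝ) + 1 ≤ F j := by exact_mod_cast (q j).isLt
    have := (p j : ℕ).cast_nonneg (α := ℝ)
    have := (q j : ℕ).cast_nonneg (α := ℝ)
    rw [abs_sub_le_iff]; constructor <;> linarith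
  have hrest : |∑ j ∈ Iio i, Δ j| ≤ ∑ j ∈ Iio i, |t j| * ((F j : ℝ) - 1) :=
    (abs_sum_le_sum_abs _ _).trans <| sum_le_sum fun j _ => by
      rw [abs_mul]; exact mul_le_mul_of_nonneg_left (hdigit j) (abs_nonneg _)
  have hlead : |t i| ≤ |Δ i| := by
    have : (1 : ℝ) ≤ |(p i : ℝ) - q i| := by
      have h : ((p i : ℤ) - q i) ≠ 0 := sub_ne_zero.2 (by exact_mod_cast Fin.val_ne_of_ne hi)
      exact_mod_cast Int.one_le_abs h
    simpa [Δ, abs_mul] using le_mul_of_one_le_right (abs_nonneg (t i)) this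
  rw [hsum]
  have := abs_sub (Δ i + ∑ j ∈ Iio i, Δ j) (∑ j ∈ Iio i, Δ j)
  rw [add_sub_cancel_right] at this
  linarith [ht i]

end MixedRadix

theorem sum_pi_prod_pow_eq_zero {R : Type*} [CommRing R] [IsDomain R]
    {ι : Type*} [Fintype ι] [DecidableEq ι] {F : ι → ℕ} {z : ι → R} {k : ι} (hk : 1 < F k)
    (hz : IsPrimitiveRoot (z k) (F k)) :
    ∑ p : ∀ i, Fin (F i), ∏ i, z i ^ (p i : ℕ) = 0 := by
  rw [← Fintype.prod_sum (fun i (j : Fin (F i)) => z i ^ (j : ℕ))]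
  refine prod_eq_zero (mem_univ k) ?_
  rw [Fin.sum_univ_eq_sum_range (z k ^ ·)]
  exact hz.geom_sum_eq_zero hk

theorem exists_abs_ge_exp_mul_eq (δ : ℝ) (hδ : δ ≠ 0) (n : ℕ) (A : ℝ) :
    ∃ t : ℝ, A ≤ |t| ∧ exp (I * ↑(δ * t)) = exp (2 * π * I / n) := by
  -- `δ t` may be any point of `2π/n + 2πℕ`; a large multiple of `2π` makes `|t| ≥ A`.
  set M : ℕ := ⌈A * |δ| / (2 * π)⌉₊
  refine ⟨2 * π * (M + 1 / n) / δ, ?_, ?_⟩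
  · have hM : A * |δ| / (2 * π) ≤ M := Nat.le_ceil _
    rw [abs_div, abs_of_nonneg (by positivity), le_div_iff₀ (abs_pos.2 hδ)]
    rw [div_le_iff₀ (by positivity)] at hM
    nlinarith [Real.pi_pos, (by positivity : (0 : ℝ) ≤ 1 / n)]
  · rw [mul_div_cancel₀ _ hδ]
    push_cast
    rw [show I * (2 * π * (M + 1 / n)) = M * (2 * π * I) + 2 * π * I / n by ring, exp_add,
      exp_nat_mul_two_pi_mul_I, one_mul]

theorem conj_exp_mul_exp (a b : ℝ) :
    (starRingEnd ℂ) (exp (I * a)) * exp (I * b) = exp (I * ↑(b - a)) := by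
  rw [← exp_conj, ← exp_add, map_mul, conj_I, conj_ofReal]
  push_cast
  ring_nf

theorem stmt_10_general (I K N : ℕ) (f : Fin I → ℕ) (hf : ∀ i, Nat.Prime (f i))
    (hN : N = ∏ i, f i) (hK : K ≤ I)
    (lam dmin : ℝ) (hlam : 0 < lam)
    (θ₀ : ℝ) (θ : Fin K → ℝ) (hθ : ∀ k, Real.cos (θ k) ≠ Real.cos θ₀) :
    ∃ x : Fin N → ℝ,
      (∀ m n : Fin N, m ≠ n → dmin ≤ |x m - x n|) ∧
      ∀ k : Fin K,
        (∑ n : Fin N,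
          (starRingEnd ℂ) (Complex.exp (Complex.I * ((2 * Real.pi / lam) * x n * Real.cos (θ k) : ℝ))) *
            Complex.exp (Complex.I * ((2 * Real.pi / lam) * x n * Real.cos θ₀ : ℝ))) = 0 := by
  set δ : Fin K → ℝ := fun k => 2 * π / lam * (Real.cos θ₀ - Real.cos (θ k))
  have hδ k : δ k ≠ 0 := mul_ne_zero (by positivity) (sub_ne_zero.2 (hθ k).symm)
  obtain ⟨t, ht⟩ := exists_abs_ge_add_sum_Iio (ι := Fin I)
    (P := fun i s => ∀ h : (i : ℕ) < K,
      exp (Complex.I * ↑(δ ⟨i, h⟩ * s)) = exp (2 * π * Complex.I / f i))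
    (fun i A => if h : (i : ℕ) < K then
        (exists_abs_ge_exp_mul_eq _ (hδ ⟨i, h⟩) (f i) A).imp fun _ hs => ⟨hs.1, fun _ => hs.2⟩
      else ⟨A, le_abs_self A, fun h' => absurd h' h⟩)
    (fun j => (f j : ℝ) - 1) dmin
  let e : (∀ i, Fin (f i)) ≃ Fin N := Fintype.equivFinOfCardEq (by simp [hN])
  let position (p : ∀ i, Fin (f i)) : ℝ := ∑ i, t i * (p i : ℝ)
  refine ⟨fun n => position (e.symm n), fun m n hmn =>
    le_abs_sum_mul_sub (fun i => (ht i).2) (e.symm.injective.ne hmn), fun k => ?_⟩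
  simp_rw [conj_exp_mul_exp, ← mul_sub, mul_right_comm _ _ (Real.cos θ₀ - _)]
  rw [e.symm.sum_comp (fun p => exp (Complex.I * ↑(δ k * position p)))]
  have hexp p : exp (Complex.I * ↑(δ k * position p)) =
      ∏ i, exp (Complex.I * ↑(δ k * t i)) ^ (p i : ℕ) := by
    simp_rw [position, mul_sum, ofReal_sum, mul_sum, exp_sum, ← exp_nat_mul]
    exact prod_congr rfl fun i _ => by push_cast; ring_nf
  simp_rw [hexp]
  let k' : Fin I := Fin.castLE hK k
  refine sum_pi_prod_pow_eq_zero (k := k') (hf k').one_lt ?_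
  have hroot : exp (Complex.I * ↑(δ k * t k')) = exp (2 * π * Complex.I / f k') :=
    (ht k').1 k.isLt
  exact hroot ▸ isPrimitiveRoot_exp _ (hf k').ne_zero

/-- Theorem 1: if `N = ∏_{i=1}^{I} f_i` with the `f_i` primes sorted in non-decreasing
order and `K ≤ I`, then for any null directions `θ₁,…,θ_K` with `cos θ_k ≠ cos θ₀`
there exists an APV `x` with pairwise spacing `≥ d_min` satisfying the SVO condition
`a(x,θ_k)ᴴ a(x,θ₀) = 0` for all `k`. -/
theorem stmt_10 (I K N : ℕ) (f : Fin I → ℕ) (hf : ∀ i, Nat.Prime (f i))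
    (hsorted : Monotone f) (hN : N = ∏ i, f i) (hK : K ≤ I)
    (lam dmin : ℝ) (hlam : 0 < lam) (hdmin : 0 < dmin)
    (θ₀ : ℝ) (θ : Fin K → ℝ) (hθ : ∀ k, Real.cos (θ k) ≠ Real.cos θ₀) :
    ∃ x : Fin N → ℝ,
      (∀ m n : Fin N, m ≠ n → dmin ≤ |x m - x n|) ∧
      ∀ k : Fin K,
        (∑ n : Fin N,
          (starRingEnd ℂ) (Complex.exp (Complex.I * ((2 * Real.pi / lam) * x n * Real.cos (θ k) : ℝ))) *
            Complex.exp (Complex.I * ((2 * Real.pi / lam) * x n * Real.cos θ₀ : ℝ))) = 0 :=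
  stmt_10_general I K N f hf hN hK lam dmin hlam θ₀ θ hθ
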